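/- Consider words over Σ = {a,b} and the function L(w) = max(#_a(w), #_b(w)) mapping a nonempty word to the maximum of its letter counts. There is no functional Sum-automaton computing L. -/
import Mathlib


/-- A nondeterministic weighted automaton with state set `Fin n` over alphabet `A`,
with integer weights on transitions (Sum measure). -/
structure NWA (A : Type*) (n : ℕ) where
  init : Fin n
  final : Set (Fin n)
  trans : Set (Fin n × A × Fin n)
  wt : Fin n × A × Fin n → ℤ

/-- `ρ` is an accepting run of `M` on the word `w`. -/
def NWA.IsAccRun {A : Type*} {n : ℕ} (M : NWA A n) (w : List A)
    (ρ : Fin (w.length + 1) → Fin n) : Prop :=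
  (ρ 0 = M.init ∧ ∀ i : Fin w.length, (ρ i.castSucc, w.get i, ρ i.succ) ∈ M.trans) ∧
  ρ (Fin.last w.length) ∈ M.final

/-- The Sum-value of a run: the sum of the weights along its transitions. -/
def NWA.sumValue {A : Type*} {n : ℕ} (M : NWA A n) (w : List A)
    (ρ : Fin (w.length + 1) → Fin n) : ℤ :=
  (List.ofFn fun i : Fin w.length => M.wt (ρ i.castSucc, w.get i, ρ i.succ)).sum

inductive Steps {A : Type*} {n : ℕ} (M : NWA A n) : Fin n → List A → ℤ → Fin n → Prop
  | nil (p : Fin n) : Steps M p [] 0 p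
  | cons {p r q : Fin n} {a : A} {w : List A} {c : ℤ} :
      (p, a, r) ∈ M.trans → Steps M r w c q → Steps M p (a :: w) (M.wt (p, a, r) + c) q

lemma Steps.append {A : Type*} {n : ℕ} {M : NWA A n} {p q r : Fin n} {u v : List A}
    {c d : ℤ} (h1 : Steps M p u c q) (h2 : Steps M q v d r) :
    Steps M p (u ++ v) (c + d) r := by
  induction h1 with
  | nil => simpa using h2
  | cons ht _ ih => simpa [add_assoc] using Steps.cons ht (ih h2)

lemma NWA.sumValue_cons {A : Type*} {n : ℕ} (M : NWA A n) (a : A) (w : List A)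
    (ρ : Fin (w.length + 1 + 1) → Fin n) :
    M.sumValue (a :: w) ρ = M.wt (ρ 0, a, ρ 1) + M.sumValue w (fun i => ρ i.succ) := by
  unfold NWA.sumValue
  rw [List.ofFn_succ, List.sum_cons]
  congr 1

lemma Steps.exists_run {A : Type*} {n : ℕ} {M : NWA A n} {p q : Fin n} {w : List A}
    {c : ℤ} (h : Steps M p w c q) :
    ∃ ρ : Fin (w.length + 1) → Fin n, ρ 0 = p ∧ ρ (Fin.last w.length) = q ∧
      (∀ i : Fin w.length, (ρ i.castSucc, w.get i, ρ i.succ) ∈ M.trans) ∧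
      M.sumValue w ρ = c := by
  induction h with
  | nil p => exact ⟨fun _ => p, rfl, rfl, fun i => i.elim0, by simp [NWA.sumValue]⟩
  | @cons p r q a w c ht _ ih =>
    obtain ⟨ρ, h0, hl, htr, hs⟩ := ih
    have hone : (1 : Fin (w.length + 1 + 1)) = Fin.succ 0 := rfl
    refine ⟨Fin.cases p ρ, by simp, ?_, ?_, ?_⟩
    · show (fun i => (Fin.cases p ρ : Fin (w.length+1+1) → Fin n) i) (Fin.last w.length).succ = q
      simp only [Fin.cases_succ]
      exact hl
    · intro i
      induction i using Fin.cases with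
      | zero =>
        simp only [Fin.castSucc_zero, Fin.cases_zero, Fin.cases_succ, h0, List.get_cons_zero]
        exact ht
      | succ j =>
        have e1 : (Fin.succ j).castSucc = (j.castSucc).succ := (Fin.succ_castSucc j).symm
        simp only [e1, Fin.cases_succ]
        simpa using htr j
    · rw [NWA.sumValue_cons]
      simp only [Fin.cases_zero, hone, Fin.cases_succ, h0]
      have hρ : M.sumValue w (fun i => ρ i) = c := hs
      rw [hρ]

lemma run_seg {A : Type*} {n : ℕ} {M : NWA A n} {w : List A}
    {ρ : Fin (w.length + 1) → Fin n}
    (hT : ∀ i : Fin w.length, (ρ i.castSucc, w.get i, ρ i.succ) ∈ M.trans)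
    (i : ℕ) (hi : i ≤ w.length) :
    ∀ (j : ℕ) (hij : i ≤ j) (hj : j ≤ w.length),
      ∃ c, Steps M (ρ ⟨i, by omega⟩) ((w.take j).drop i) c (ρ ⟨j, by omega⟩) := by
  intro j hij
  induction j, hij using Nat.le_induction with
  | base =>
    intro hj
    refine ⟨0, ?_⟩
    have : (w.take i).drop i = [] := by simp
    rw [this]
    exact Steps.nil _
  | succ j hij ih =>
    intro hj1
    obtain ⟨c, hc⟩ := ih (by omega)
    have hjlt : j < w.length := by omega
    have hstep : Steps M (ρ ⟨j, by omega⟩) [w.get ⟨j, hjlt⟩]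
        (M.wt (ρ ⟨j, by omega⟩, w.get ⟨j, hjlt⟩, ρ ⟨j+1, by omega⟩) + 0) (ρ ⟨j+1, by omega⟩) := by
      refine Steps.cons ?_ (Steps.nil _)
      have := hT ⟨j, hjlt⟩
      simpa [Fin.castSucc, Fin.succ] using this
    have hsplit : (w.take (j+1)).drop i = (w.take j).drop i ++ [w.get ⟨j, hjlt⟩] := by
      rw [List.take_succ]
      rw [List.drop_append_of_le_length (by simp; omega)]
      congr 1
      simp [List.getElem?_eq_getElem hjlt, List.get_eq_getElem]
    exact ⟨_, hsplit ▸ hc.append hstep⟩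

lemma run_seg' {A : Type*} {n : ℕ} {M : NWA A n} {w : List A}
    {ρ : Fin (w.length + 1) → Fin n}
    (hT : ∀ i : Fin w.length, (ρ i.castSucc, w.get i, ρ i.succ) ∈ M.trans)
    (i j : ℕ) (hij : i ≤ j) (hi : i < w.length + 1) (hj : j < w.length + 1) :
    ∃ c, Steps M (ρ ⟨i, hi⟩) ((w.take j).drop i) c (ρ ⟨j, hj⟩) :=
  run_seg hT i (by omega) j hij (by omega)


/-- No functional Sum-automaton computes `w ↦ max(#_a(w), #_b(w))` on nonempty words:
there is no finite-state Sum-automaton all of whose accepting runs on each nonempty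
word `w` have value `max(#_true(w), #_false(w))`, and whose domain is all nonempty words. -/
theorem no_sum_automaton_computes_max :
    ¬ ∃ (n : ℕ) (M : NWA Bool n),
      (∀ w : List Bool, w ≠ [] → ∃ ρ, M.IsAccRun w ρ) ∧
      (∀ (w : List Bool) (ρ : Fin (w.length + 1) → Fin n), M.IsAccRun w ρ →
        M.sumValue w ρ = max (w.count true : ℤ) (w.count false : ℤ)) := by
  rintro ⟨n, M, h1, h2⟩
  set N := n + 1 with hN
  set w : List Bool := List.replicate N true ++ List.replicate N false with hw
  have hlen : w.length = N + N := by simp [hw]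
  obtain ⟨ρ, ⟨h0, hT⟩, hF⟩ := h1 w (by simp [hw])
  have hlast : w.length < w.length + 1 := by omega
  have hFl : ρ ⟨w.length, hlast⟩ ∈ M.final := by
    have e : (⟨w.length, hlast⟩ : Fin (w.length + 1)) = Fin.last w.length := rfl
    rw [e]; exact hF
  have h0e : ∀ (hz : 0 < w.length + 1), ρ ⟨0, hz⟩ = M.init := by
    intro hz
    have e : (⟨0, hz⟩ : Fin (w.length + 1)) = 0 := by ext; simp
    rw [e]; exact h0
  have hEval : ∀ (W : List Bool) (val : ℤ), Steps M M.init W val (ρ ⟨w.length, hlast⟩) →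
      val = max (W.count true : ℤ) (W.count false : ℤ) := by
    intro W val S
    obtain ⟨ρ', r0, rl, rt, rs⟩ := S.exists_run
    rw [← rs]
    exact h2 W ρ' ⟨⟨r0, rt⟩, by rw [rl]; exact hFl⟩
  have key : ∀ (i j : ℕ) (hi : i < w.length + 1) (hj : j < w.length + 1),
      i < j → j ≤ N → ρ ⟨i, hi⟩ = ρ ⟨j, hj⟩ → False := by
    intro i j hi hj hij hjN hρeq
    have hu : w.take i = List.replicate i true := by
      rw [hw, List.take_append_of_le_length (by simp; omega), List.take_replicate]
      congr 1
      omega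
    have hxx : w.take j = List.replicate j true := by
      rw [hw, List.take_append_of_le_length (by simp; omega), List.take_replicate]
      congr 1
      omega
    have hx : (w.take j).drop i = List.replicate (j - i) true := by
      rw [hxx, List.drop_replicate]
    have hv : w.drop j = List.replicate (N - j) true ++ List.replicate N false := by
      rw [hw, List.drop_append_of_le_length (by simp; omega), List.drop_replicate]
    obtain ⟨a, Sa⟩ := run_seg' hT 0 i (by omega) (by omega) hi
    rw [List.drop_zero, hu, h0e, hρeq] at Sa
    obtain ⟨b, Sb⟩ := run_seg' hT i j (by omega) hi hj
    rw [hx, hρeq] at Sb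
    obtain ⟨cc, Sc⟩ := run_seg' hT j w.length (by omega) hj hlast
    rw [List.take_length, hv] at Sc
    have E1 := hEval _ _ (Sa.append (Sb.append Sc))
    have E2 := hEval _ _ (Sa.append Sc)
    have E3 := hEval _ _ (Sa.append (Sb.append (Sb.append Sc)))
    simp only [List.count_append, List.count_replicate] at E1 E2 E3
    simp at E1 E2 E3
    push_cast at E1 E2 E3
    omega
  have hcard : Fintype.card (Fin n) < Fintype.card (Fin (N + 1)) := by
    simp
    omega
  obtain ⟨i0, j0, hne, heq⟩ := Fintype.exists_ne_map_eq_of_card_lt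
    (fun k : Fin (N + 1) => ρ ⟨k.val, by have := k.isLt; omega⟩) hcard
  rcases Nat.lt_or_ge i0.val j0.val with hlt | hge
  · exact key i0.val j0.val _ _ hlt (by have := j0.isLt; omega) heq
  · have hgt : j0.val < i0.val := by
      have := Fin.val_ne_of_ne hne
      omega
    exact key j0.val i0.val _ _ hgt (by have := i0.isLt; omega) heq.symm
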